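/- arXiv:1708.01008 — 3 statements merged into one kernel-verified Lean document; each statement's English description precedes it below -/
import Mathlib

section
/- For all reals a ≥ 0 and b > 0, the generalized inverse Gaussian integral of order 1/2 evaluates to ∫₀^∞ x^{−1/2} · exp(−(a/x + b·x)/2) dx = √(2π/b) · exp(−√(a·b)). -/
open MeasureTheory Real

section GIGAux
open Set

private lemma gauss_half : ∫ x : ℝ, Real.exp (-x^2/2) = Real.sqrt (2*π) := by
  have h := integral_gaussian (1/2 : ℝ)
  rw [show (π / (1/2:ℝ)) = 2*π by ring] at h
  simp_rw [show ∀ x:ℝ, -(1/2:ℝ)*x^2 = -x^2/2 from fun x => by ring] at h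
  exact h

private lemma phi_deriv (α β t : ℝ) (ht : t ≠ 0) :
    HasDerivAt (fun t : ℝ => α * t - β / t) (α + β / t^2) t := by
  have h1 : HasDerivAt (fun t:ℝ => α * t) α t := by
    simpa using (hasDerivAt_id t).const_mul α
  have h2 : HasDerivAt (fun t:ℝ => β / t) (-(β / t^2)) t := by
    simpa [div_eq_mul_inv, mul_neg] using (hasDerivAt_inv ht).const_mul β
  have h3 := h1.sub h2
  rw [sub_neg_eq_add] at h3
  exact h3

private lemma phi_inj (α β : ℝ) (hα : 0 < α) (hβ : 0 < β) :
    Set.InjOn (fun t : ℝ => α * t - β / t) (Set.Ioi 0) := by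
  intro s hs t ht h
  simp only [Set.mem_Ioi] at hs ht
  have h' : α * s - β / s = α * t - β / t := h
  have h2 : (α * s - β / s) * (s * t) = (α * t - β / t) * (s * t) := by rw [h']
  have hs0 : s ≠ 0 := ne_of_gt hs
  have ht0 : t ≠ 0 := ne_of_gt ht
  field_simp at h2
  have h3 : (s - t) * (α * s * t + β) * (s * t) = 0 := by linear_combination (s * t) * h2
  have h4 : 0 < α * s * t + β := by positivity
  have h5 : 0 < s * t := by positivity
  rcases mul_eq_zero.mp h3 with h6 | h6
  · rcases mul_eq_zero.mp h6 with h7 | h7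
    · linarith
    · linarith
  · linarith

private lemma phi_surj (α β : ℝ) (hα : 0 < α) (hβ : 0 < β) :
    (fun t : ℝ => α * t - β / t) '' Set.Ioi 0 = Set.univ := by
  rw [Set.eq_univ_iff_forall]
  intro y
  set s := Real.sqrt (y^2 + 4*α*β) with hs
  have hs2 : s^2 = y^2 + 4*α*β := Real.sq_sqrt (by positivity)
  have hsy : |y| < s := by
    rw [← Real.sqrt_sq_eq_abs]
    exact Real.sqrt_lt_sqrt (sq_nonneg y) (by nlinarith)
  have hys : 0 < y + s := by have := neg_abs_le y; linarith
  have ht : 0 < (y + s)/(2*α) := div_pos hys (by positivity)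
  refine ⟨(y+s)/(2*α), ht, ?_⟩
  show α * ((y+s)/(2*α)) - β / ((y+s)/(2*α)) = y
  have h2a : (2*α:ℝ) ≠ 0 := by positivity
  field_simp
  nlinarith [hs2]

private lemma schlomilch_int (α β : ℝ) (hα : 0 < α) (hβ : 0 < β) :
    IntegrableOn (fun t : ℝ => Real.exp (-(α * t - β / t)^2 / 2)) (Set.Ioi 0) := by
  have hgauss : Integrable (fun t : ℝ => Real.exp (α*β) * Real.exp (-(α^2/2) * t^2)) := by
    exact (integrable_exp_neg_mul_sq (by positivity)).const_mul _
  apply Integrable.mono' hgauss.integrableOn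
  · apply ContinuousOn.aestronglyMeasurable _ measurableSet_Ioi
    apply Continuous.comp_continuousOn continuous_exp
    apply ContinuousOn.div _ continuousOn_const (fun t ht => by norm_num)
    apply ContinuousOn.neg
    apply ContinuousOn.pow
    exact (continuous_const.mul continuous_id).continuousOn.sub
      (continuousOn_const.div continuousOn_id (fun t ht => ne_of_gt ht))
  · filter_upwards [self_mem_ae_restrict measurableSet_Ioi] with t ht
    simp only [Set.mem_Ioi] at ht
    rw [Real.norm_eq_abs, abs_of_pos (Real.exp_pos _), ← Real.exp_add]
    apply Real.exp_le_exp.mpr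
    have h1 : (α * t - β / t)^2 = α^2*t^2 - 2*(α*β) + (β/t)^2 := by
      field_simp; ring
    nlinarith [sq_nonneg (β/t)]

private lemma schlomilch (α β : ℝ) (hα : 0 < α) (hβ : 0 < β) :
    ∫ t in Set.Ioi (0:ℝ), Real.exp (-(α * t - β / t)^2 / 2)
      = Real.sqrt (2*π) / (2*α) := by
  set f : ℝ → ℝ := fun t => Real.exp (-(α * t - β / t)^2 / 2) with hf
  -- reflection map r t = (β/α) * t⁻¹
  have hrimg : (fun t : ℝ => (β/α) * t⁻¹) '' Set.Ioi 0 = Set.Ioi 0 := by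
    ext x
    constructor
    · rintro ⟨t, ht, rfl⟩
      exact mul_pos (div_pos hβ hα) (inv_pos.mpr ht)
    · intro hx
      refine ⟨(β/α) * x⁻¹, mul_pos (div_pos hβ hα) (inv_pos.mpr hx), ?_⟩
      field_simp
  have hrderiv : ∀ t ∈ Set.Ioi (0:ℝ),
      HasDerivWithinAt (fun t : ℝ => (β/α) * t⁻¹) ((β/α) * (-(t^2)⁻¹)) (Set.Ioi 0) t :=
    fun t ht => ((hasDerivAt_inv (ne_of_gt ht)).const_mul (β/α)).hasDerivWithinAt
  have hrinj : Set.InjOn (fun t : ℝ => (β/α) * t⁻¹) (Set.Ioi 0) := by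
    intro s hs t ht h
    have hba : (β/α) ≠ 0 := by positivity
    exact inv_injective (mul_left_cancel₀ hba h)
  have hrefl := integral_image_eq_integral_abs_deriv_smul measurableSet_Ioi hrderiv hrinj f
  rw [hrimg] at hrefl
  -- simplify the reflected integrand
  have hreq : ∀ t ∈ Set.Ioi (0:ℝ),
      |(β/α) * (-(t^2)⁻¹)| • f ((β/α) * t⁻¹) = ((β/α) * (t^2)⁻¹) * f t := by
    intro t ht
    simp only [Set.mem_Ioi] at ht
    have ht0 : t ≠ 0 := ne_of_gt ht
    have h1 : |(β/α) * (-(t^2)⁻¹)| = (β/α) * (t^2)⁻¹ := by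
      rw [abs_mul, abs_of_pos (div_pos hβ hα), abs_neg, abs_inv, abs_of_pos (pow_pos ht 2)]
    have h2 : f ((β/α) * t⁻¹) = f t := by
      simp only [hf]
      congr 1
      have hβα : (β/α) * t⁻¹ ≠ 0 := by positivity
      field_simp
      ring
    rw [h1, h2, smul_eq_mul]
  rw [setIntegral_congr_fun measurableSet_Ioi hreq] at hrefl
  -- integrability of the reflected integrand
  have hint : IntegrableOn f (Set.Ioi 0) := schlomilch_int α β hα hβ
  have hrint : IntegrableOn (fun t : ℝ => ((β/α) * (t^2)⁻¹) * f t) (Set.Ioi 0) := by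
    have := (integrableOn_image_iff_integrableOn_abs_deriv_smul
      measurableSet_Ioi hrderiv hrinj f).mp (by rwa [hrimg])
    exact this.congr_fun hreq measurableSet_Ioi
  -- sum step
  have hsum : ∫ t in Set.Ioi (0:ℝ), (α + β / t^2) * f t
      = 2 * α * ∫ t in Set.Ioi (0:ℝ), f t := by
    have heq : ∀ t ∈ Set.Ioi (0:ℝ),
        (α + β / t^2) * f t = α * f t + α * (((β/α) * (t^2)⁻¹) * f t) := by
      intro t ht
      simp only [Set.mem_Ioi] at ht
      have ht0 : t ≠ 0 := ne_of_gt ht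
      field_simp
    rw [setIntegral_congr_fun measurableSet_Ioi heq,
      integral_add (hint.const_mul α) (hrint.const_mul α),
      integral_const_mul, integral_const_mul, ← hrefl]
    ring
  -- main substitution
  have hphideriv : ∀ t ∈ Set.Ioi (0:ℝ),
      HasDerivWithinAt (fun t : ℝ => α * t - β / t) (α + β / t^2) (Set.Ioi 0) t :=
    fun t ht => (phi_deriv α β t (ne_of_gt ht)).hasDerivWithinAt
  have main := integral_image_eq_integral_abs_deriv_smul measurableSet_Ioi hphideriv
    (phi_inj α β hα hβ) (fun x => Real.exp (-x^2/2))
  rw [phi_surj α β hα hβ] at main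
  rw [Measure.restrict_univ] at main
  rw [gauss_half] at main
  have hmeq : ∀ t ∈ Set.Ioi (0:ℝ),
      |α + β / t^2| • Real.exp (-(α * t - β / t)^2/2) = (α + β / t^2) * f t := by
    intro t ht
    simp only [Set.mem_Ioi] at ht
    rw [abs_of_pos (by positivity), smul_eq_mul, hf]
  rw [setIntegral_congr_fun measurableSet_Ioi hmeq, hsum] at main
  have : (0:ℝ) < 2 * α := by positivity
  field_simp at main ⊢
  linarith

end GIGAux

/-- Generalized inverse Gaussian integral of order 1/2:
∫₀^∞ x^{−1/2}·exp(−(a/x + b·x)/2) dx = √(2π/b)·exp(−√(a·b)). -/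
theorem gig_integral_half (a b : ℝ) (ha : 0 ≤ a) (hb : 0 < b) :
    (∫ x in Set.Ioi (0 : ℝ), x ^ (-(1 : ℝ) / 2) * Real.exp (-(a / x + b * x) / 2)) =
    Real.sqrt (2 * Real.pi / b) * Real.exp (-Real.sqrt (a * b)) := by
  rcases ha.eq_or_lt with rfl | ha'
  · -- a = 0 : Gamma integral
    have h := Real.integral_rpow_mul_exp_neg_mul_Ioi
      (show (0:ℝ) < 1/2 by norm_num) (show (0:ℝ) < b/2 by positivity)
    have heq : ∀ x ∈ Set.Ioi (0:ℝ),
        x ^ (-(1:ℝ)/2) * Real.exp (-((0:ℝ)/x + b*x)/2)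
          = x ^ ((1:ℝ)/2 - 1) * Real.exp (-(b/2 * x)) := by
      intro x hx
      rw [show ((1:ℝ)/2 - 1) = -(1:ℝ)/2 by norm_num, zero_div, zero_add,
        show -(b*x)/2 = -(b/2*x) by ring]
    rw [setIntegral_congr_fun measurableSet_Ioi heq, h]
    rw [Real.Gamma_one_half_eq]
    rw [show ((1:ℝ)/(b/2)) = 2/b by ring]
    rw [← Real.sqrt_eq_rpow, ← Real.sqrt_mul (by positivity : (0:ℝ) ≤ 2/b) π,
      show ((2/b)*π : ℝ) = 2*π/b by ring]
    simp
  · -- a > 0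
    set α := Real.sqrt b with hαdef
    set β := Real.sqrt a with hβdef
    have hα : 0 < α := Real.sqrt_pos.mpr hb
    have hβ : 0 < β := Real.sqrt_pos.mpr ha'
    have hα2 : α^2 = b := Real.sq_sqrt hb.le
    have hβ2 : β^2 = a := Real.sq_sqrt ha'.le
    -- substitution x = t^2
    have hsqimg : (fun t : ℝ => t^2) '' Set.Ioi 0 = Set.Ioi 0 := by
      ext x
      constructor
      · rintro ⟨t, ht, rfl⟩; exact pow_pos (Set.mem_Ioi.mp ht) 2
      · intro hx; exact ⟨Real.sqrt x, Real.sqrt_pos.mpr hx, Real.sq_sqrt hx.le⟩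
    have hsqderiv : ∀ t ∈ Set.Ioi (0:ℝ),
        HasDerivWithinAt (fun t : ℝ => t^2) (2*t) (Set.Ioi 0) t := by
      intro t ht
      simpa using (hasDerivAt_pow 2 t).hasDerivWithinAt
    have hsqinj : Set.InjOn (fun t : ℝ => t^2) (Set.Ioi 0) := by
      intro s hs t ht h
      simp only [Set.mem_Ioi] at hs ht
      have h' : s^2 = t^2 := h
      rw [← Real.sqrt_sq hs.le, h', Real.sqrt_sq ht.le]
    have step1 := integral_image_eq_integral_abs_deriv_smul measurableSet_Ioi hsqderiv hsqinj
      (fun x => x ^ (-(1:ℝ)/2) * Real.exp (-(a/x + b*x)/2))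
    rw [hsqimg] at step1
    have step2 : ∀ t ∈ Set.Ioi (0:ℝ),
        |2*t| • ((t^2 : ℝ) ^ (-(1:ℝ)/2) * Real.exp (-(a/t^2 + b*t^2)/2))
          = 2 * (Real.exp (-(α*β)) * Real.exp (-(α*t - β/t)^2/2)) := by
      intro t ht
      simp only [Set.mem_Ioi] at ht
      have ht0 : t ≠ 0 := ne_of_gt ht
      have hrp : ((t^2 : ℝ)) ^ (-(1:ℝ)/2) = t⁻¹ := by
        rw [← Real.rpow_natCast t 2, ← Real.rpow_mul ht.le]
        norm_num
        exact Real.rpow_neg_one t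
      have hexp : Real.exp (-(a/t^2 + b*t^2)/2)
          = Real.exp (-(α*β)) * Real.exp (-(α*t - β/t)^2/2) := by
        rw [← Real.exp_add]
        congr 1
        rw [← hα2, ← hβ2]
        field_simp
        ring
      rw [abs_of_pos (by positivity), hrp, hexp, smul_eq_mul]
      field_simp
    rw [setIntegral_congr_fun measurableSet_Ioi step2] at step1
    rw [integral_const_mul, integral_const_mul, schlomilch α β hα hβ] at step1
    rw [step1]
    have h1 : Real.sqrt (a*b) = α * β := by
      rw [Real.sqrt_mul ha b]; ring
    have h2 : Real.sqrt (2*π/b) = Real.sqrt (2*π) / α := by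
      rw [Real.sqrt_div (by positivity : (0:ℝ) ≤ 2*π)]
    rw [h1, h2]
    field_simp
end

section
/- For all reals a ≥ 0 and b > 0, the generalized inverse Gaussian integral of order 3/2 evaluates to ∫₀^∞ x^{1/2} · exp(−(a/x + b·x)/2) dx = √(2π/b) · exp(−√(a·b)) · (√(a/b) + 1/b). -/
open MeasureTheory Real Set

lemma integrable_exp_half : Integrable fun u : ℝ => Real.exp (-(1/2) * u ^ 2) :=
  integrable_exp_neg_mul_sq (by norm_num)

lemma integrable_sq_exp_half : Integrable fun u : ℝ => u ^ 2 * Real.exp (-(1/2) * u ^ 2) := by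
  have h := integrable_rpow_mul_exp_neg_mul_sq (b := (1/2:ℝ)) (by norm_num) (s := 2) (by norm_num)
  have : ∀ u : ℝ, u ^ (2:ℝ) = u ^ 2 := fun u => by
    rw [show (2:ℝ) = ((2:ℕ):ℝ) by norm_num, Real.rpow_natCast]
  simpa [this] using h

lemma integral_exp_half : ∫ u : ℝ, Real.exp (-(1/2) * u ^ 2) = Real.sqrt (2 * Real.pi) := by
  rw [integral_gaussian]
  norm_num [mul_comm]

lemma integral_sq_exp_half :
    ∫ u : ℝ, u ^ 2 * Real.exp (-(1/2) * u ^ 2) = Real.sqrt (2 * Real.pi) := by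
  have habs : ∀ u : ℝ, u ^ 2 * Real.exp (-(1/2) * u ^ 2)
      = |u| ^ 2 * Real.exp (-(1/2) * |u| ^ 2) := fun u => by rw [sq_abs]
  calc ∫ u : ℝ, u ^ 2 * Real.exp (-(1/2) * u ^ 2)
      = ∫ u : ℝ, |u| ^ 2 * Real.exp (-(1/2) * |u| ^ 2) :=
        integral_congr_ae (Filter.Eventually.of_forall habs)
    _ = 2 * ∫ u in Ioi (0:ℝ), u ^ 2 * Real.exp (-(1/2) * u ^ 2) :=
        integral_comp_abs (f := fun u => u ^ 2 * Real.exp (-(1/2) * u ^ 2))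
    _ = Real.sqrt (2 * Real.pi) := by
        have : ∫ u in Ioi (0:ℝ), u ^ 2 * Real.exp (-(1/2) * u ^ 2)
            = ∫ u in Ioi (0:ℝ), u ^ (2:ℝ) * Real.exp (-(1/2) * u ^ (2:ℝ)) := by
          refine setIntegral_congr_fun measurableSet_Ioi (fun u hu => ?_)
          rw [show (2:ℝ) = ((2:ℕ):ℝ) by norm_num, Real.rpow_natCast]
        rw [this, integral_rpow_mul_exp_neg_mul_rpow (by norm_num) (by norm_num) (by norm_num)]
        rw [show ((2:ℝ)+1)/2 = 1/2 + 1 by norm_num, Real.Gamma_add_one (by norm_num),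
          Real.Gamma_one_half_eq]
        rw [show (-((2:ℝ)+1)/2) = (-(3/2) : ℝ) by norm_num]
        rw [Real.rpow_neg (by norm_num), show ((3:ℝ)/2) = 1 + 1/2 by norm_num,
          Real.rpow_add (by norm_num), Real.rpow_one, ← Real.sqrt_eq_rpow]
        rw [show Real.sqrt (2*Real.pi) = Real.sqrt 2 * Real.sqrt Real.pi from
          Real.sqrt_mul (by norm_num) _]
        have h2 : Real.sqrt (1/2) = 1 / Real.sqrt 2 := by
          rw [one_div, one_div, Real.sqrt_inv]
        rw [h2]
        have hs2 : (0:ℝ) < Real.sqrt 2 := Real.sqrt_pos.mpr (by norm_num)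
        have h22 : Real.sqrt 2 * Real.sqrt 2 = 2 := Real.mul_self_sqrt (by norm_num)
        field_simp

/-- algebraic identity: square completion -/
lemma gig_alg1 (t r s : ℝ) (ht : t ≠ 0) :
    (s * t - r / t) ^ 2 + 4 * (r * s) = (s * t + r / t) ^ 2 := by
  field_simp; ring

lemma gig_alg2 (t r s : ℝ) (ht : t ≠ 0) :
    (s * t - r / t) ^ 2 = s ^ 2 * t ^ 2 + r ^ 2 / t ^ 2 - 2 * (r * s) := by
  field_simp; ring

lemma gig_pos (a b : ℝ) (ha : 0 < a) (hb : 0 < b) :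
    (∫ x in Set.Ioi (0 : ℝ), x ^ ((1 : ℝ) / 2) * Real.exp (-(a / x + b * x) / 2)) =
    Real.sqrt (2 * Real.pi / b) * Real.exp (-Real.sqrt (a * b)) *
      (Real.sqrt (a / b) + 1 / b) := by
  set r := Real.sqrt a with hr_def
  set s := Real.sqrt b with hs_def
  have hr : 0 < r := Real.sqrt_pos.mpr ha
  have hs : 0 < s := Real.sqrt_pos.mpr hb
  have hr2 : r ^ 2 = a := Real.sq_sqrt ha.le
  have hs2 : s ^ 2 = b := Real.sq_sqrt hb.le
  set c := r * s with hc_def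
  have hc : 0 < c := mul_pos hr hs
  have hab : Real.sqrt (a * b) = c := by
    rw [Real.sqrt_mul ha.le]
  set φ : ℝ → ℝ := fun x => s * Real.sqrt x - r / Real.sqrt x with hφ_def
  set φ' : ℝ → ℝ := fun x => s / (2 * Real.sqrt x) + r / (2 * x * Real.sqrt x) with hφ'_def
  set S : ℝ → ℝ := fun u => Real.sqrt (u ^ 2 + 4 * c) with hS_def
  set g : ℝ → ℝ := fun u =>
    Real.exp (-c) * Real.exp (-(1/2) * u ^ 2) * (u + S u) ^ 3 / (4 * s ^ 3 * S u) with hg_def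
  -- basic facts about S
  have hS2 : ∀ u : ℝ, S u ^ 2 = u ^ 2 + 4 * c := fun u => Real.sq_sqrt (by positivity)
  have hSpos : ∀ u : ℝ, 0 < S u := fun u => Real.sqrt_pos.mpr (by positivity)
  have hSabs : ∀ u : ℝ, |u| < S u := fun u => by
    rw [← Real.sqrt_sq_eq_abs]
    exact Real.sqrt_lt_sqrt (sq_nonneg u) (by nlinarith)
  have hSu : ∀ u : ℝ, 0 < u + S u := fun u => by
    have h1 := hSabs u
    have h2 := neg_abs_le u
    linarith
  -- derivative of φ
  have hderiv : ∀ x ∈ Set.Ioi (0:ℝ), HasDerivAt φ (φ' x) x := by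
    intro x hx
    have hx0 : (0:ℝ) < x := hx
    have hsx : 0 < Real.sqrt x := Real.sqrt_pos.mpr hx0
    have hsq : Real.sqrt x ^ 2 = x := Real.sq_sqrt hx0.le
    have h1 : HasDerivAt Real.sqrt (1 / (2 * Real.sqrt x)) x := Real.hasDerivAt_sqrt hx0.ne'
    have h2 := (h1.const_mul s).sub (((h1.inv hsx.ne').const_mul r))
    have heq : φ = fun y => s * Real.sqrt y - r * (Real.sqrt y)⁻¹ := by
      funext y; rw [hφ_def]; ring
    rw [heq]
    convert h2 using 1
    · rfl
    · rfl
    · rfl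
    rw [hφ'_def]
    rw [← hsq]
    field_simp
    rw [Real.sqrt_sq hsx.le]
    ring
  -- strict monotonicity
  have hmono : StrictMonoOn φ (Set.Ioi 0) := by
    intro x hx y hy hxy
    have hx0 : (0:ℝ) < x := hx
    have h1 : Real.sqrt x < Real.sqrt y := Real.sqrt_lt_sqrt hx0.le hxy
    have h2 : 0 < Real.sqrt x := Real.sqrt_pos.mpr hx0
    have h3 : r / Real.sqrt y < r / Real.sqrt x := div_lt_div_of_pos_left hr h2 h1
    have h4 : s * Real.sqrt x < s * Real.sqrt y := mul_lt_mul_of_pos_left h1 hs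
    simp only [hφ_def]
    linarith
  -- surjectivity
  have himage : φ '' Set.Ioi 0 = Set.univ := by
    apply Set.eq_univ_of_forall
    intro u
    have hup : 0 < u + S u := hSu u
    set t : ℝ := (u + S u) / (2 * s) with ht_def
    have ht : 0 < t := div_pos hup (by positivity)
    refine ⟨t ^ 2, Set.mem_Ioi.mpr (by positivity), ?_⟩
    have hst : Real.sqrt (t ^ 2) = t := Real.sqrt_sq ht.le
    have key : (u + S u) ^ 2 = 2 * u * (u + S u) + 4 * c := by
      have := hS2 u; nlinarith
    simp only [hφ_def, hst]
    rw [ht_def]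
    field_simp
    linear_combination key + 4 * hc_def
  -- pointwise identity for the substitution
  have hpoint : ∀ x ∈ Set.Ioi (0:ℝ),
      x ^ ((1 : ℝ) / 2) * Real.exp (-(a / x + b * x) / 2) = |φ' x| • g (φ x) := by
    intro x hx
    have hx0 : (0:ℝ) < x := hx
    have hsx : 0 < Real.sqrt x := Real.sqrt_pos.mpr hx0
    have hsq : Real.sqrt x ^ 2 = x := Real.sq_sqrt hx0.le
    have hφ'pos : 0 < φ' x := by
      simp only [hφ'_def]; positivity
    have hSφ : S (φ x) = s * Real.sqrt x + r / Real.sqrt x := by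
      show Real.sqrt ((φ x) ^ 2 + 4 * c) = s * Real.sqrt x + r / Real.sqrt x
      rw [show (φ x) ^ 2 + 4 * c = (s * Real.sqrt x + r / Real.sqrt x) ^ 2 from by
        simp only [hφ_def]; rw [hc_def]; exact gig_alg1 _ r s hsx.ne']
      exact Real.sqrt_sq (by positivity)
    have hφsq : (φ x) ^ 2 = b * x + a / x - 2 * c := by
      have h := gig_alg2 (Real.sqrt x) r s hsx.ne'
      simp only [hφ_def]
      rw [h, hsq, hr2, hs2, ← hc_def]
    have hexp : Real.exp (-c) * Real.exp (-(1/2) * (φ x) ^ 2)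
        = Real.exp (-(a / x + b * x) / 2) := by
      rw [← Real.exp_add]
      congr 1
      rw [hφsq]; ring
    have hrp : x ^ ((1 : ℝ) / 2) = Real.sqrt x := (Real.sqrt_eq_rpow x).symm
    rw [abs_of_pos hφ'pos, smul_eq_mul, hg_def]
    simp only
    rw [hSφ]
    rw [show φ x + (s * Real.sqrt x + r / Real.sqrt x) = 2 * s * Real.sqrt x from by
      simp only [hφ_def]; ring]
    rw [hexp, hrp]
    have hden : s * Real.sqrt x + r / Real.sqrt x ≠ 0 := by positivity
    simp only [hφ'_def]
    set t := Real.sqrt x with htdef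
    clear_value t
    rw [← hsq]
    field_simp
    ring
  -- continuity and integrability of g
  have hScont : Continuous S := by
    rw [hS_def]; exact Real.continuous_sqrt.comp ((continuous_pow 2).add continuous_const)
  have hgcont : Continuous g := by
    rw [hg_def]
    apply Continuous.div
    · exact (continuous_const.mul (Real.continuous_exp.comp
        (continuous_const.mul (continuous_pow 2)))).mul ((continuous_id.add hScont).pow 3)
    · exact continuous_const.mul hScont
    · exact fun u => by positivity
  set B : ℝ → ℝ := fun u => (2 * Real.exp (-c) / s ^ 3) * (u ^ 2 * Real.exp (-(1/2) * u ^ 2))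
      + (8 * c * Real.exp (-c) / s ^ 3) * Real.exp (-(1/2) * u ^ 2) with hB_def
  have hB_int : Integrable B :=
    (integrable_sq_exp_half.const_mul _).add (integrable_exp_half.const_mul _)
  have hgb : ∀ u : ℝ, ‖g u‖ ≤ B u := by
    intro u
    have hSpu := hSpos u
    have hSuu := hSu u
    have hgnn : 0 ≤ g u := by
      rw [hg_def]
      apply div_nonneg _ (by positivity)
      exact mul_nonneg (by positivity) (pow_nonneg hSuu.le 3)
    rw [Real.norm_of_nonneg hgnn]
    have h2 : u + S u ≤ 2 * S u := by linarith [le_abs_self u, (hSabs u).le]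
    have h1 : (u + S u) ^ 3 ≤ 8 * S u ^ 3 := by
      calc (u + S u) ^ 3 ≤ (2 * S u) ^ 3 := pow_le_pow_left₀ hSuu.le h2 3
        _ = 8 * S u ^ 3 := by ring
    calc g u ≤ Real.exp (-c) * Real.exp (-(1/2) * u ^ 2) * (8 * S u ^ 3) / (4 * s ^ 3 * S u) := by
          rw [hg_def]
          simp only
          gcongr

      _ = (2 * Real.exp (-c) / s ^ 3) * (S u ^ 2 * Real.exp (-(1/2) * u ^ 2)) := by
          field_simp
          ring
      _ = B u := by rw [hS2 u, hB_def]; ring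
  have hg_int : Integrable g :=
    Integrable.mono' hB_int hgcont.aestronglyMeasurable (Filter.Eventually.of_forall hgb)
  have hBneg : ∀ u : ℝ, B (-u) = B u := fun u => by
    rw [hB_def]; simp only [neg_sq]
  have hgneg : Integrable (fun u => g (-u)) := by
    refine Integrable.mono' hB_int (hgcont.comp continuous_neg).aestronglyMeasurable
      (Filter.Eventually.of_forall fun u => ?_)
    calc ‖g (-u)‖ ≤ B (-u) := hgb (-u)
      _ = B u := hBneg u
  -- symmetrization
  have hsym : ∀ u : ℝ, g u + g (-u)
      = 2 * ((Real.exp (-c) / s ^ 3) * ((u ^ 2 + c) * Real.exp (-(1/2) * u ^ 2))) := by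
    intro u
    have hSneg : S (-u) = S u := by
      show Real.sqrt ((-u) ^ 2 + 4 * c) = S u
      rw [neg_sq]
    have hSne := (hSpos u).ne'
    have h3 := hS2 u
    rw [hg_def]
    simp only
    rw [hSneg, neg_sq]
    have hE : Real.exp (-(1/2) * u ^ 2) = Real.exp (-u ^ 2 / 2) := by ring_nf
    rw [hE]
    field_simp
    linear_combination 2 * S u * h3
  -- putting it together
  calc (∫ x in Set.Ioi (0 : ℝ), x ^ ((1 : ℝ) / 2) * Real.exp (-(a / x + b * x) / 2))
      = ∫ x in Set.Ioi (0:ℝ), |φ' x| • g (φ x) :=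
        setIntegral_congr_fun measurableSet_Ioi hpoint
    _ = ∫ u in φ '' Set.Ioi 0, g u :=
        (integral_image_eq_integral_abs_deriv_smul measurableSet_Ioi
          (fun x hx => (hderiv x hx).hasDerivWithinAt) (hmono.injOn) g).symm
    _ = ∫ u, g u := by rw [himage, Measure.restrict_univ]
    _ = (1/2) * ∫ u, (g u + g (-u)) := by
        rw [integral_add hg_int hgneg, integral_neg_eq_self g]
        ring
    _ = (1/2) * ∫ u, 2 * ((Real.exp (-c) / s ^ 3)
          * ((u ^ 2 + c) * Real.exp (-(1/2) * u ^ 2))) := by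
        congr 1
        exact integral_congr_ae (Filter.Eventually.of_forall hsym)
    _ = (Real.exp (-c) / s ^ 3)
          * ∫ u, ((u ^ 2 + c) * Real.exp (-(1/2) * u ^ 2)) := by
        rw [integral_const_mul, integral_const_mul]
        ring
    _ = (Real.exp (-c) / s ^ 3) * ((∫ u, u ^ 2 * Real.exp (-(1/2) * u ^ 2))
          + c * ∫ u, Real.exp (-(1/2) * u ^ 2)) := by
        congr 1
        have heq : (fun u : ℝ => (u ^ 2 + c) * Real.exp (-(1/2) * u ^ 2))
            = fun u : ℝ => u ^ 2 * Real.exp (-(1/2) * u ^ 2)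
              + c * Real.exp (-(1/2) * u ^ 2) := by
          funext u; ring
        rw [heq, integral_add integrable_sq_exp_half (integrable_exp_half.const_mul c),
          integral_const_mul]
    _ = Real.sqrt (2 * Real.pi / b) * Real.exp (-Real.sqrt (a * b))
          * (Real.sqrt (a / b) + 1 / b) := by
        rw [integral_sq_exp_half, integral_exp_half, hab]
        rw [show Real.sqrt (2 * Real.pi / b) = Real.sqrt (2 * Real.pi) / s from by
          rw [Real.sqrt_div (by positivity)]]
        rw [show Real.sqrt (a / b) = r / s from by rw [Real.sqrt_div ha.le]]
        rw [← hs2]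
        field_simp
        rw [hc_def]
        ring

lemma gig_zero (b : ℝ) (hb : 0 < b) :
    (∫ x in Set.Ioi (0 : ℝ), x ^ ((1 : ℝ) / 2) * Real.exp (-((0:ℝ) / x + b * x) / 2)) =
    Real.sqrt (2 * Real.pi / b) * Real.exp (-Real.sqrt (0 * b)) *
      (Real.sqrt (0 / b) + 1 / b) := by
  have h := integral_rpow_mul_exp_neg_mul_rpow (p := 1) (q := 1/2) (b := b/2)
    one_pos (by norm_num) (by positivity)
  have hLHS : (∫ x in Set.Ioi (0 : ℝ), x ^ ((1 : ℝ) / 2) * Real.exp (-((0:ℝ) / x + b * x) / 2))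
      = ∫ x in Set.Ioi (0:ℝ), x ^ ((1:ℝ)/2) * Real.exp (-(b/2) * x ^ (1:ℝ)) := by
    refine setIntegral_congr_fun measurableSet_Ioi (fun x hx => ?_)
    rw [Real.rpow_one, zero_div]
    congr 1
    ring
  rw [hLHS, h]
  rw [show ((1:ℝ)/2 + 1)/1 = 1/2 + 1 by norm_num, Real.Gamma_add_one (by norm_num),
    Real.Gamma_one_half_eq]
  rw [show (-((1:ℝ)/2 + 1)/1) = -(3/2 : ℝ) by norm_num]
  rw [Real.rpow_neg (by positivity), show ((3:ℝ)/2) = 1 + 1/2 by norm_num,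
    Real.rpow_add (by positivity), Real.rpow_one, ← Real.sqrt_eq_rpow]
  rw [zero_mul, Real.sqrt_zero, neg_zero, Real.exp_zero, zero_div, Real.sqrt_zero]
  rw [show Real.sqrt (2 * Real.pi / b) = Real.sqrt (2 * Real.pi) / Real.sqrt b from
    Real.sqrt_div (by positivity) b]
  rw [show Real.sqrt (2 * Real.pi) = Real.sqrt 2 * Real.sqrt Real.pi from
    Real.sqrt_mul (by norm_num) _]
  rw [show Real.sqrt (b/2) = Real.sqrt b / Real.sqrt 2 from Real.sqrt_div hb.le 2]
  have h2 : Real.sqrt 2 * Real.sqrt 2 = 2 := Real.mul_self_sqrt (by norm_num)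
  have hbb : Real.sqrt b * Real.sqrt b = b := Real.mul_self_sqrt hb.le
  have h2p : (0:ℝ) < Real.sqrt 2 := Real.sqrt_pos.mpr (by norm_num)
  have hbp : (0:ℝ) < Real.sqrt b := Real.sqrt_pos.mpr hb
  field_simp
  nlinarith [Real.sqrt_nonneg Real.pi, Real.pi_pos]

/-- Generalized inverse Gaussian integral of order 3/2:
∫₀^∞ x^{1/2}·exp(−(a/x + b·x)/2) dx = √(2π/b)·exp(−√(a·b))·(√(a/b) + 1/b). -/
theorem gig_integral_three_half (a b : ℝ) (ha : 0 ≤ a) (hb : 0 < b) :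
    (∫ x in Set.Ioi (0 : ℝ), x ^ ((1 : ℝ) / 2) * Real.exp (-(a / x + b * x) / 2)) =
    Real.sqrt (2 * Real.pi / b) * Real.exp (-Real.sqrt (a * b)) *
      (Real.sqrt (a / b) + 1 / b) := by
  rcases eq_or_lt_of_le ha with h | h
  · subst h
    exact gig_zero b hb
  · exact gig_pos a b h hb
end

section
/- For every real κ > 0 and every real λ, marginalizing the two-level prior consisting of a zero-mean Gaussian with variance γ mixed over γ distributed as Gamma with shape 1 and rate κ/2 yields a Laplace density: ∫₀^∞ (2πγ)^{−1/2} · exp(−λ²/(2γ)) · (κ/2) · exp(−κ·γ/2) dγ = (√κ/2) · exp(−√κ·|λ|). -/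
open MeasureTheory Real Set

/-- The Glasser-type integral `∫₀^∞ exp(-a/x² - b x²) dx`. -/
lemma glasser_aux {a b : ℝ} (ha : 0 ≤ a) (hb : 0 < b) :
    ∫ x in Set.Ioi (0:ℝ), Real.exp (-(a / x ^ 2) - b * x ^ 2)
      = Real.sqrt (π / b) / 2 * Real.exp (-2 * Real.sqrt (a * b)) := by
  rcases eq_or_lt_of_le ha with rfl | ha
  · simp only [zero_div, neg_zero, zero_sub, zero_mul, Real.sqrt_zero, mul_zero, Real.exp_zero,
      mul_one]
    simpa using integral_gaussian_Ioi b
  · set p := Real.sqrt a with hpdef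
    set q := Real.sqrt b with hqdef
    have hp : 0 < p := Real.sqrt_pos.mpr ha
    have hq : 0 < q := Real.sqrt_pos.mpr hb
    have hp2 : p ^ 2 = a := Real.sq_sqrt ha.le
    have hq2 : q ^ 2 = b := Real.sq_sqrt hb.le
    set f : ℝ → ℝ := fun x => q * x - p / x with hfdef
    set E : ℝ → ℝ := fun x => Real.exp (-(f x) ^ 2) with hEdef
    -- derivative of f on Ioi 0
    have hderiv : ∀ x ∈ Ioi (0:ℝ), HasDerivWithinAt f (q + p / x ^ 2) (Ioi (0:ℝ)) x := by
      intro x hx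
      have hx0 : x ≠ 0 := (mem_Ioi.mp hx).ne'
      have h1 : HasDerivAt f (q * 1 - p * (-(x ^ 2)⁻¹)) x := by
        have h0 : HasDerivAt (fun y => q * y - p * y⁻¹) (q * 1 - p * -(x ^ 2)⁻¹) x :=
          ((hasDerivAt_id x).const_mul q).sub ((hasDerivAt_inv hx0).const_mul p)
        simpa only [hfdef, div_eq_mul_inv] using h0
      have he : q * 1 - p * (-(x ^ 2)⁻¹) = q + p / x ^ 2 := by ring
      rw [he] at h1
      exact h1.hasDerivWithinAt
    -- injectivity of f on Ioi 0
    have hinj : InjOn f (Ioi (0:ℝ)) := by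
      intro x hx y hy hxy
      have hx0 : (0:ℝ) < x := hx
      have hy0 : (0:ℝ) < y := hy
      have h3 : q * x - p / x = q * y - p / y := hxy
      have h2 : (x - y) * (q * (x * y) + p) = 0 := by
        field_simp at h3
        nlinarith [h3]
      have h4 : 0 < q * (x * y) + p := by positivity
      rcases mul_eq_zero.mp h2 with h | h
      · linarith [sub_eq_zero.mp h]
      · linarith
    -- f maps Ioi 0 onto ℝ
    have himg : f '' Ioi (0:ℝ) = univ := by
      apply eq_univ_of_forall
      intro u
      set r := Real.sqrt (u ^ 2 + 4 * p * q) with hrdef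
      have hr2 : r ^ 2 = u ^ 2 + 4 * p * q := Real.sq_sqrt (by positivity)
      have hr0 : 0 ≤ r := Real.sqrt_nonneg _
      have hru : -u < r := by nlinarith [mul_pos hp hq]
      have hxpos : 0 < (u + r) / (2 * q) := div_pos (by linarith) (by linarith)
      refine ⟨(u + r) / (2 * q), hxpos, ?_⟩
      show q * ((u + r) / (2 * q)) - p / ((u + r) / (2 * q)) = u
      have hur : (0:ℝ) < u + r := by linarith
      field_simp
      nlinarith [hr2]
    -- first change of variables
    have key : Real.sqrt π = ∫ x in Ioi (0:ℝ), (q + p / x ^ 2) * E x := by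
      have h := integral_image_eq_integral_abs_deriv_smul measurableSet_Ioi hderiv hinj
        (fun u => Real.exp (-u ^ 2))
      rw [himg] at h
      have hL : ∫ x in (univ : Set ℝ), Real.exp (-x ^ 2) = Real.sqrt π := by
        rw [Measure.restrict_univ]
        simpa using integral_gaussian 1
      rw [hL] at h
      rw [h]
      apply setIntegral_congr_fun measurableSet_Ioi
      intro x hx
      have hx0 : (0:ℝ) < x := hx
      have habs : |q + p / x ^ 2| = q + p / x ^ 2 := abs_of_pos (by positivity)
      simp [habs, smul_eq_mul, hEdef]
    -- second change of variables : J = ∫ (c/x²) E with c = p/q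
    set c := p / q with hcdef
    have hc : 0 < c := div_pos hp hq
    have key2 : (∫ x in Ioi (0:ℝ), E x) = ∫ x in Ioi (0:ℝ), (c / x ^ 2) * E x := by
      have hderiv2 : ∀ x ∈ Ioi (0:ℝ),
          HasDerivWithinAt (fun x => c / x) (-(c / x ^ 2)) (Ioi (0:ℝ)) x := by
        intro x hx
        have hx0 : x ≠ 0 := (mem_Ioi.mp hx).ne'
        have h1 : HasDerivAt (fun x => c / x) (c * (-(x ^ 2)⁻¹)) x := by
          simpa [div_eq_mul_inv] using (hasDerivAt_inv hx0).const_mul c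
        have he : c * (-(x ^ 2)⁻¹) = -(c / x ^ 2) := by ring
        rw [he] at h1
        exact h1.hasDerivWithinAt
      have hinj2 : InjOn (fun x => c / x) (Ioi (0:ℝ)) := by
        intro x hx y hy hxy
        have hx0 : (0:ℝ) < x := hx
        have hy0 : (0:ℝ) < y := hy
        have h3 : c / x = c / y := hxy
        field_simp at h3
        linarith
      have himg2 : (fun x => c / x) '' Ioi (0:ℝ) = Ioi (0:ℝ) := by
        apply Subset.antisymm
        · rintro _ ⟨x, hx, rfl⟩
          exact div_pos hc hx
        · intro y hy
          exact ⟨c / y, div_pos hc hy, by field_simp⟩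
      have h := integral_image_eq_integral_abs_deriv_smul measurableSet_Ioi hderiv2 hinj2 E
      rw [himg2] at h
      rw [h]
      apply setIntegral_congr_fun measurableSet_Ioi
      intro x hx
      have hx0 : (0:ℝ) < x := hx
      have habs : |(-(c / x ^ 2))| = c / x ^ 2 := by
        rw [abs_neg]; exact abs_of_pos (by positivity)
      have hfc : f (c / x) = -(f x) := by
        show q * (c / x) - p / (c / x) = -(q * x - p / x)
        rw [hcdef]
        field_simp
        ring
      simp only [smul_eq_mul, habs, hEdef, hfc, neg_neg, neg_sq]
    -- measurability of E
    have hEmeas : Measurable E := by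
      apply Real.measurable_exp.comp
      apply Measurable.neg
      apply Measurable.pow _ measurable_const
      exact (measurable_const.mul measurable_id).sub (measurable_const.mul measurable_inv)
    -- integrability facts
    have hItot : IntegrableOn (fun x => (q + p / x ^ 2) * E x) (Ioi (0:ℝ)) := by
      have hg : IntegrableOn (fun u => Real.exp (-u ^ 2)) (f '' Ioi (0:ℝ)) := by
        rw [himg, integrableOn_univ]
        simpa using integrable_exp_neg_mul_sq (by norm_num : (0:ℝ) < 1)
      have h := (integrableOn_image_iff_integrableOn_abs_deriv_smul measurableSet_Ioi hderiv hinj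
        (fun u => Real.exp (-u ^ 2))).mp hg
      apply h.congr_fun ?_ measurableSet_Ioi
      intro x hx
      have hx0 : (0:ℝ) < x := hx
      have habs : |q + p / x ^ 2| = q + p / x ^ 2 := abs_of_pos (by positivity)
      simp [habs, smul_eq_mul, hEdef]
    have hE : IntegrableOn E (Ioi (0:ℝ)) := by
      apply Integrable.mono' (hItot.const_mul q⁻¹) (hEmeas.aestronglyMeasurable.restrict)
      filter_upwards with x
      have hEpos : 0 < E x := Real.exp_pos _
      have h1 : 0 ≤ p / x ^ 2 := by positivity
      have h2 : (1:ℝ) ≤ q⁻¹ * (q + p / x ^ 2) := by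
        rw [inv_mul_eq_div, le_div_iff₀ hq]
        linarith
      calc ‖E x‖ = 1 * E x := by rw [Real.norm_eq_abs, abs_of_pos hEpos, one_mul]
        _ ≤ q⁻¹ * (q + p / x ^ 2) * E x := by
            apply mul_le_mul_of_nonneg_right h2 hEpos.le
        _ = q⁻¹ * ((q + p / x ^ 2) * E x) := by ring
    have hK : IntegrableOn (fun x => (c / x ^ 2) * E x) (Ioi (0:ℝ)) := by
      have h : IntegrableOn (fun x => q⁻¹ * ((q + p / x ^ 2) * E x) - E x) (Ioi (0:ℝ)) :=
        (hItot.const_mul q⁻¹).sub hE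
      apply IntegrableOn.congr_fun h ?_ measurableSet_Ioi
      intro x hx
      have hx0 : x ≠ 0 := (mem_Ioi.mp hx).ne'
      show q⁻¹ * ((q + p / x ^ 2) * E x) - E x = (c / x ^ 2) * E x
      rw [hcdef]
      field_simp
      ring
    -- combine: √π = 2 q J
    set J := ∫ x in Ioi (0:ℝ), E x with hJdef
    have hsum : (∫ x in Ioi (0:ℝ), (q + p / x ^ 2) * E x) = 2 * q * J := by
      have hsplit : (∫ x in Ioi (0:ℝ), (q + p / x ^ 2) * E x)
          = ∫ x in Ioi (0:ℝ), (q * E x + q * ((c / x ^ 2) * E x)) := by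
        apply setIntegral_congr_fun measurableSet_Ioi
        intro x hx
        have hx0 : x ≠ 0 := (mem_Ioi.mp hx).ne'
        show (q + p / x ^ 2) * E x = q * E x + q * ((c / x ^ 2) * E x)
        rw [hcdef]
        field_simp
      rw [hsplit, integral_add (hE.const_mul q) (hK.const_mul q), integral_const_mul,
        integral_const_mul, ← key2]
      ring
    have hJ : J = Real.sqrt π / (2 * q) := by
      rw [eq_div_iff (by positivity : (2*q:ℝ) ≠ 0)]
      rw [key, hsum]
      ring
    -- conclude
    have hmain : (∫ x in Ioi (0:ℝ), Real.exp (-(a / x ^ 2) - b * x ^ 2))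
        = Real.exp (-2 * (p * q)) * J := by
      rw [hJdef, ← integral_const_mul]
      apply setIntegral_congr_fun measurableSet_Ioi
      intro x hx
      have hx0 : x ≠ 0 := (mem_Ioi.mp hx).ne'
      show Real.exp (-(a / x ^ 2) - b * x ^ 2) = Real.exp (-2 * (p * q)) * Real.exp (-(f x) ^ 2)
      rw [← Real.exp_add]
      congr 1
      have hfx : (f x) ^ 2 = b * x ^ 2 + a / x ^ 2 - 2 * (p * q) := by
        show (q * x - p / x) ^ 2 = b * x ^ 2 + a / x ^ 2 - 2 * (p * q)
        rw [← hp2, ← hq2]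
        field_simp
        ring
      rw [hfx]
      ring
    rw [hmain, hJ, Real.sqrt_mul ha.le, Real.sqrt_div pi_pos.le, ← hpdef, ← hqdef]
    rw [div_div]
    ring

/-- Marginalizing a zero-mean Gaussian with variance γ over γ ~ Gamma(1, κ/2)
yields a Laplace density:
∫₀^∞ (2πγ)^{−1/2}·exp(−λ²/(2γ))·(κ/2)·exp(−κγ/2) dγ = (√κ/2)·exp(−√κ·|λ|). -/
theorem gaussian_gamma_marginal_laplace (κ l : ℝ) (hκ : 0 < κ) :
    (∫ γ in Set.Ioi (0 : ℝ),
        (2 * Real.pi * γ) ^ (-(1 : ℝ) / 2) * Real.exp (-l ^ 2 / (2 * γ)) *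
          ((κ / 2) * Real.exp (-(κ * γ) / 2))) =
    (Real.sqrt κ / 2) * Real.exp (-Real.sqrt κ * |l|) := by
  have hsub := integral_comp_rpow_Ioi (fun γ =>
      (2 * Real.pi * γ) ^ (-(1 : ℝ) / 2) * Real.exp (-l ^ 2 / (2 * γ)) *
        ((κ / 2) * Real.exp (-(κ * γ) / 2))) (p := 2) two_ne_zero
  rw [← hsub]
  have hstep : (∫ x in Ioi (0:ℝ), (|(2:ℝ)| * x ^ ((2:ℝ) - 1)) •
      ((2 * Real.pi * x ^ (2:ℝ)) ^ (-(1 : ℝ) / 2) * Real.exp (-l ^ 2 / (2 * x ^ (2:ℝ))) *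
        ((κ / 2) * Real.exp (-(κ * x ^ (2:ℝ)) / 2))))
      = ∫ x in Ioi (0:ℝ), (κ / Real.sqrt (2 * π)) *
          Real.exp (-((l ^ 2 / 2) / x ^ 2) - (κ / 2) * x ^ 2) := by
    apply setIntegral_congr_fun measurableSet_Ioi
    intro x hx
    have hx0 : (0:ℝ) < x := hx
    have hrp : x ^ (2:ℝ) = x ^ 2 := by
      rw [show (2:ℝ) = ((2:ℕ):ℝ) by norm_num, Real.rpow_natCast]
    have hrp1 : x ^ ((2:ℝ) - 1) = x := by
      norm_num
    have hbase : (0:ℝ) < 2 * Real.pi * x ^ 2 := by positivity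
    have hpow : (2 * Real.pi * x ^ 2) ^ (-(1 : ℝ) / 2) = (Real.sqrt (2 * π) * x)⁻¹ := by
      rw [show (-(1:ℝ)/2) = -(1/2) by norm_num, Real.rpow_neg hbase.le, ← Real.sqrt_eq_rpow]
      congr 1
      rw [Real.sqrt_mul (by positivity) (x ^ 2), Real.sqrt_sq hx0.le]
    have hA : -l ^ 2 / (2 * x ^ 2) = -((l ^ 2 / 2) / x ^ 2) := by ring
    have hB : -(κ * x ^ 2) / 2 = -((κ / 2) * x ^ 2) := by ring
    simp only [smul_eq_mul, hrp, hrp1, hpow, hA, hB]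
    rw [show |(2:ℝ)| = 2 by norm_num]
    rw [show -((l ^ 2 / 2) / x ^ 2) - (κ / 2) * x ^ 2
        = -((l ^ 2 / 2) / x ^ 2) + -((κ / 2) * x ^ 2) by ring, Real.exp_add]
    have hs : (0:ℝ) < Real.sqrt (2 * π) := Real.sqrt_pos.mpr (by positivity)
    field_simp
  rw [hstep, integral_const_mul, glasser_aux (by positivity) (by positivity : (0:ℝ) < κ / 2)]
  -- final algebra
  have h1 : Real.sqrt (π / (κ / 2)) = Real.sqrt (2 * π) / Real.sqrt κ := by
    rw [show π / (κ / 2) = (2 * π) / κ by field_simp, Real.sqrt_div (by positivity)]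
  have h2 : Real.sqrt (l ^ 2 / 2 * (κ / 2)) = |l| * Real.sqrt κ / 2 := by
    rw [show l ^ 2 / 2 * (κ / 2) = (|l| * Real.sqrt κ / 2) ^ 2 by
      rw [div_pow, mul_pow, sq_abs, Real.sq_sqrt hκ.le]; ring]
    exact Real.sqrt_sq (by positivity)
  rw [h1, h2]
  have hs : (0:ℝ) < Real.sqrt (2 * π) := Real.sqrt_pos.mpr (by positivity)
  have hk : (0:ℝ) < Real.sqrt κ := Real.sqrt_pos.mpr hκ
  have hexp : -2 * (|l| * Real.sqrt κ / 2) = -Real.sqrt κ * |l| := by ring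
  rw [hexp]
  have hcoef : κ / Real.sqrt (2 * π) * (Real.sqrt (2 * π) / Real.sqrt κ / 2)
      = Real.sqrt κ / 2 := by
    have hkk : Real.sqrt κ * Real.sqrt κ = κ := Real.mul_self_sqrt hκ.le
    field_simp
    nlinarith [hkk]
  rw [← mul_assoc, hcoef]
end
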